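/- In the winner-bid auction with valuations v_l < v_h, tie-breaker favoring the high-valuation agent, the set of Nash equilibrium payoff vectors equals {(c_l + t, c_h + (ES − t)) : t = 0, 1, ..., ES}, where c_l = v_l/2, c_h = v_h/2 and ES = c_h − c_l. -/

import Mathlib

open Finset Filter

/-- Payoff to the low-valuation agent in the winner-bid auction when she bids `b`
and the high-valuation agent bids `r` (ties won by the high-valuation agent). -/
noncomputable def UlWB (vl : ℕ) (b r : ℕ) : ℝ := if r < b then (vl : ℝ) - b else (r : ℝ)

/-- Payoff to the high-valuation agent in the winner-bid auction when she bids `b`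
and the low-valuation agent bids `r` (ties won by the high-valuation agent). -/
noncomputable def UhWB (vh : ℕ) (b r : ℕ) : ℝ := if r ≤ b then (vh : ℝ) - b else (r : ℝ)

/-- A mixed strategy on the bid set `{0, ..., pbar}`. -/
def IsMixed (pbar : ℕ) (σ : ℕ → ℝ) : Prop :=
  (∀ b, 0 ≤ σ b) ∧ (∀ b, pbar < b → σ b = 0) ∧ ∑ b ∈ Finset.range (pbar + 1), σ b = 1

/-- Expected payoff for the low-valuation agent of bidding `b` against `σh`. -/
noncomputable def eUl (pbar vl : ℕ) (σh : ℕ → ℝ) (b : ℕ) : ℝ :=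
  ∑ r ∈ Finset.range (pbar + 1), σh r * UlWB vl b r

/-- Expected payoff for the high-valuation agent of bidding `b` against `σl`. -/
noncomputable def eUh (pbar vh : ℕ) (σl : ℕ → ℝ) (b : ℕ) : ℝ :=
  ∑ r ∈ Finset.range (pbar + 1), σl r * UhWB vh b r

/-- Nash equilibrium of the winner-bid auction. -/
def IsNashWB (pbar vl vh : ℕ) (σl σh : ℕ → ℝ) : Prop :=
  IsMixed pbar σl ∧ IsMixed pbar σh ∧
  (∀ b ≤ pbar, 0 < σl b → ∀ b' ≤ pbar, eUl pbar vl σh b' ≤ eUl pbar vl σh b) ∧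
  (∀ b ≤ pbar, 0 < σh b → ∀ b' ≤ pbar, eUh pbar vh σl b' ≤ eUh pbar vh σl b)

/-- Expected payoff of the low-valuation agent at a mixed profile. -/
noncomputable def piL (pbar vl : ℕ) (σl σh : ℕ → ℝ) : ℝ :=
  ∑ b ∈ Finset.range (pbar + 1), σl b * eUl pbar vl σh b

/-- Expected payoff of the high-valuation agent at a mixed profile. -/
noncomputable def piH (pbar vh : ℕ) (σl σh : ℕ → ℝ) : ℝ :=
  ∑ b ∈ Finset.range (pbar + 1), σh b * eUh pbar vh σl b

/-- Weak payoff monotonicity for the low-valuation agent. -/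
def WPMl (pbar vl : ℕ) (σl σh : ℕ → ℝ) : Prop :=
  ∀ a ≤ pbar, ∀ b ≤ pbar, σl b < σl a → eUl pbar vl σh b < eUl pbar vl σh a

/-- Weak payoff monotonicity for the high-valuation agent. -/
def WPMh (pbar vh : ℕ) (σl σh : ℕ → ℝ) : Prop :=
  ∀ a ≤ pbar, ∀ b ≤ pbar, σh b < σh a → eUh pbar vh σl b < eUh pbar vh σl a

/-- Expected bid under a mixed strategy. -/
noncomputable def Ebid (pbar : ℕ) (σ : ℕ → ℝ) : ℝ :=
  ∑ b ∈ Finset.range (pbar + 1), σ b * b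

/-! Let `m` be the highest bid of `l` and `k` the lowest bid of `h` in an equilibrium, and
suppose `k < m`. Then `m ≤ c_l`, since above `c_l` shading her bid by one only helps `l`; next,
`l` bids at most `k` with positive probability, since otherwise `h` would rather win outright
by bidding `m < c_h`; but `l` strictly prefers `m` to such a bid. Hence `m ≤ k`: `h` always wins,
so she bids exactly `k`, and the payoffs are `k` for `l` and `v_h - k` for `h`. Bidding `c_i`
secures `c_i` to agent `i`, so `c_l ≤ k ≤ c_h`; conversely, both agents bidding any such `k` is
an equilibrium. -/

section Payoffs

lemma UlWB_of_lt {vl b r : ℕ} (h : r < b) : UlWB vl b r = vl - b := if_pos h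

lemma UlWB_of_le {vl b r : ℕ} (h : b ≤ r) : UlWB vl b r = r := if_neg h.not_gt

lemma UhWB_of_le {vh b r : ℕ} (h : r ≤ b) : UhWB vh b r = vh - b := if_pos h

lemma UhWB_of_lt {vh b r : ℕ} (h : b < r) : UhWB vh b r = r := if_neg h.not_ge

variable {c b r : ℕ}

lemma half_le_UlWB (r : ℕ) : (c : ℝ) ≤ UlWB (2 * c) c r := by
  rcases lt_or_ge r c with h | h
  · rw [UlWB_of_lt h]; push_cast; linarith
  · rw [UlWB_of_le h]; exact_mod_cast h

lemma half_le_UhWB (r : ℕ) : (c : ℝ) ≤ UhWB (2 * c) c r := by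
  rcases le_or_gt r c with h | h
  · rw [UhWB_of_le h]; push_cast; linarith
  · rw [UhWB_of_lt h]; exact_mod_cast h.le

lemma UlWB_le_of_half_le (hc : c ≤ r) (b : ℕ) : UlWB (2 * c) b r ≤ r := by
  rcases lt_or_ge r b with h | h
  · have : (r : ℝ) + 1 ≤ b := by exact_mod_cast h
    have : (c : ℝ) ≤ r := by exact_mod_cast hc
    rw [UlWB_of_lt h]; push_cast; linarith
  · rw [UlWB_of_le h]

lemma UhWB_le_of_le_half (hc : r ≤ c) (b : ℕ) : UhWB (2 * c) b r ≤ 2 * c - r := by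
  rcases le_or_gt r b with h | h
  · have : (r : ℝ) ≤ b := by exact_mod_cast h
    rw [UhWB_of_le h]; push_cast; linarith
  · have : (r : ℝ) ≤ c := by exact_mod_cast hc
    rw [UhWB_of_lt h]; linarith

lemma UlWB_succ_lt (hc : c ≤ b) (hr : r ≤ b) : UlWB (2 * c) (b + 1) r < UlWB (2 * c) b r := by
  have hcb : (c : ℝ) ≤ b := by exact_mod_cast hc
  rw [UlWB_of_lt (Nat.lt_succ_of_le hr)]
  rcases hr.lt_or_eq with hr | rfl
  · rw [UlWB_of_lt hr]; push_cast; linarith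
  · rw [UlWB_of_le le_rfl]; push_cast; linarith

lemma UlWB_succ_le (hc : c ≤ b) (r : ℕ) : UlWB (2 * c) (b + 1) r ≤ UlWB (2 * c) b r := by
  rcases le_or_gt r b with hr | hr
  · exact (UlWB_succ_lt hc hr).le
  · rw [UlWB_of_le hr, UlWB_of_le hr.le]

lemma le_UlWB (hb : b ≤ c) (r : ℕ) : (r : ℝ) ≤ UlWB (2 * c) b r := by
  rcases lt_or_ge r b with hr | hr
  · have : (r : ℝ) < b := by exact_mod_cast hr
    have : (b : ℝ) ≤ c := by exact_mod_cast hb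
    rw [UlWB_of_lt hr]; push_cast; linarith
  · rw [UlWB_of_le hr]

lemma lt_UlWB (hb : b ≤ c) (hr : r < b) : (r : ℝ) < UlWB (2 * c) b r := by
  have : (r : ℝ) < b := by exact_mod_cast hr
  have : (b : ℝ) ≤ c := by exact_mod_cast hb
  rw [UlWB_of_lt hr]; push_cast; linarith

end Payoffs

namespace IsMixed

variable {pbar : ℕ} {σ f : ℕ → ℝ}

lemma le_of_pos (hσ : IsMixed pbar σ) {b : ℕ} (hb : 0 < σ b) : b ≤ pbar := by
  by_contra! h
  exact hb.ne' (hσ.2.1 b h)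

lemma exists_pos (hσ : IsMixed pbar σ) : ∃ b, 0 < σ b := by
  by_contra! h
  have : ∑ b ∈ range (pbar + 1), σ b = 0 := sum_eq_zero fun b _ => (h b).antisymm (hσ.1 b)
  simp [hσ.2.2] at this

lemma exists_isGreatest (hσ : IsMixed pbar σ) : ∃ m, IsGreatest {b | 0 < σ b} m :=
  BddAbove.exists_isGreatest_of_nonempty ⟨pbar, fun _ hb => hσ.le_of_pos hb⟩ hσ.exists_pos

lemma exists_isLeast (hσ : IsMixed pbar σ) : ∃ k, IsLeast {b | 0 < σ b} k :=
  BddBelow.exists_isLeast_of_nonempty (OrderBot.bddBelow _) hσ.exists_pos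

lemma sum_mul_eq (hσ : IsMixed pbar σ) {c : ℝ} (h : ∀ r, 0 < σ r → f r = c) :
    ∑ r ∈ range (pbar + 1), σ r * f r = c := by
  calc ∑ r ∈ range (pbar + 1), σ r * f r = ∑ r ∈ range (pbar + 1), σ r * c := by
        refine sum_congr rfl fun r _ => ?_
        rcases (hσ.1 r).eq_or_lt with h0 | hpos
        · rw [← h0, zero_mul, zero_mul]
        · rw [h r hpos]
    _ = c := by rw [← sum_mul, hσ.2.2, one_mul]

lemma le_sum_mul (hσ : IsMixed pbar σ) {c : ℝ} (h : ∀ r, c ≤ f r) :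
    c ≤ ∑ r ∈ range (pbar + 1), σ r * f r :=
  calc c = ∑ r ∈ range (pbar + 1), σ r * c := (hσ.sum_mul_eq fun _ _ => rfl).symm
    _ ≤ _ := sum_le_sum fun r _ => mul_le_mul_of_nonneg_left (h r) (hσ.1 r)

lemma sum_mul_lt (hσ : IsMixed pbar σ) {g : ℕ → ℝ} (h : ∀ r, 0 < σ r → f r ≤ g r) {r₀ : ℕ}
    (hr₀ : 0 < σ r₀) (hlt : f r₀ < g r₀) :
    ∑ r ∈ range (pbar + 1), σ r * f r < ∑ r ∈ range (pbar + 1), σ r * g r := by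
  refine sum_lt_sum (fun r _ => ?_) ⟨r₀, mem_range.2 (Nat.lt_succ_of_le (hσ.le_of_pos hr₀)),
    mul_lt_mul_of_pos_left hlt hr₀⟩
  rcases (hσ.1 r).eq_or_lt with h0 | hpos
  · rw [← h0, zero_mul, zero_mul]
  · exact mul_le_mul_of_nonneg_left (h r hpos) hpos.le

end IsMixed

section ExpectedPayoffs

variable {pbar c b m r : ℕ} {σ : ℕ → ℝ}

lemma half_le_eUl (hσ : IsMixed pbar σ) : (c : ℝ) ≤ eUl pbar (2 * c) σ c :=
  hσ.le_sum_mul half_le_UlWB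

lemma half_le_eUh (hσ : IsMixed pbar σ) : (c : ℝ) ≤ eUh pbar (2 * c) σ c :=
  hσ.le_sum_mul half_le_UhWB

lemma eUl_succ_lt (hσ : IsMixed pbar σ) (hc : c ≤ b) (hr : 0 < σ r) (hrb : r ≤ b) :
    eUl pbar (2 * c) σ (b + 1) < eUl pbar (2 * c) σ b :=
  hσ.sum_mul_lt (fun r _ => UlWB_succ_le hc r) hr (UlWB_succ_lt hc hrb)

lemma eUl_lt_of_forall_le (hσ : IsMixed pbar σ) (hm : m ≤ c) (hb : ∀ r, 0 < σ r → b ≤ r)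
    (hr : 0 < σ r) (hrm : r < m) : eUl pbar (2 * c) σ b < eUl pbar (2 * c) σ m :=
  hσ.sum_mul_lt (fun r hr => (UlWB_of_le (hb r hr)).trans_le (le_UlWB hm r)) hr
    ((UlWB_of_le (hb r hr)).trans_lt (lt_UlWB hm hrm))

lemma eUh_lt_of_forall_mem_Ioc (hσ : IsMixed pbar σ) (hm : m < c)
    (hσm : ∀ r, 0 < σ r → b < r ∧ r ≤ m) : eUh pbar (2 * c) σ b < eUh pbar (2 * c) σ m := by
  have hlt : ∀ r, 0 < σ r → UhWB (2 * c) b r < UhWB (2 * c) m r := fun r hr => by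
    obtain ⟨hbr, hrm⟩ := hσm r hr
    have : (r : ℝ) ≤ m := by exact_mod_cast hrm
    have : (m : ℝ) < c := by exact_mod_cast hm
    rw [UhWB_of_lt hbr, UhWB_of_le hrm]; push_cast; linarith
  obtain ⟨r, hr⟩ := hσ.exists_pos
  exact hσ.sum_mul_lt (fun r hr => (hlt r hr).le) hr (hlt r hr)

end ExpectedPayoffs

namespace IsNashWB

variable {pbar vl vh cl ch b r : ℕ} {σl σh : ℕ → ℝ}

lemma eUl_le (h : IsNashWB pbar vl vh σl σh) (hb : 0 < σl b) {b' : ℕ} (hb' : b' ≤ pbar) :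
    eUl pbar vl σh b' ≤ eUl pbar vl σh b :=
  h.2.2.1 b (h.1.le_of_pos hb) hb b' hb'

lemma eUh_le (h : IsNashWB pbar vl vh σl σh) (hb : 0 < σh b) {b' : ℕ} (hb' : b' ≤ pbar) :
    eUh pbar vh σl b' ≤ eUh pbar vh σl b :=
  h.2.2.2 b (h.2.1.le_of_pos hb) hb b' hb'

theorem bid_le_bid (h : IsNashWB pbar (2 * cl) (2 * ch) σl σh) (hclch : cl < ch)
    (hb : 0 < σl b) (hr : 0 < σh r) : b ≤ r := by
  obtain ⟨m, hm⟩ := h.1.exists_isGreatest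
  obtain ⟨k, hk⟩ := h.2.1.exists_isLeast
  suffices m ≤ k from (hm.2 hb).trans (this.trans (hk.2 hr))
  by_contra! hkm
  have hmp := h.1.le_of_pos hm.1
  have hmcl : m ≤ cl := by
    by_contra! hclm
    obtain ⟨b, rfl⟩ : ∃ b, m = b + 1 := ⟨m - 1, by omega⟩
    exact (h.eUl_le hm.1 (by omega : b ≤ pbar)).not_gt
      (eUl_succ_lt h.2.1 (by omega) hk.1 (by omega))
  obtain ⟨b₀, hb₀, hb₀k⟩ : ∃ b₀, 0 < σl b₀ ∧ b₀ ≤ k := by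
    by_contra! hσl
    exact (h.eUh_le hk.1 hmp).not_gt
      (eUh_lt_of_forall_mem_Ioc h.1 (by omega) fun r hr => ⟨hσl r hr, hm.2 hr⟩)
  exact (h.eUl_le hb₀ hmp).not_gt
    (eUl_lt_of_forall_le h.2.1 hmcl (fun r hr => hb₀k.trans (hk.2 hr)) hk.1 hkm)

theorem exists_payoffs_eq (h : IsNashWB pbar (2 * cl) (2 * ch) σl σh) (hclch : cl < ch)
    (hpbar : ch ≤ pbar) : ∃ k, cl ≤ k ∧ k ≤ ch ∧
      piL pbar (2 * cl) σl σh = k ∧ piH pbar (2 * ch) σl σh = 2 * ch - k := by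
  obtain ⟨k, hk⟩ := h.2.1.exists_isLeast
  have hkp := h.2.1.le_of_pos hk.1
  have hσl : ∀ b, 0 < σl b → b ≤ k := fun b hb => h.bid_le_bid hclch hb hk.1
  have heUh : ∀ b, k ≤ b → eUh pbar (2 * ch) σl b = 2 * ch - b := fun b hkb =>
    h.1.sum_mul_eq fun r hr => by rw [UhWB_of_le ((hσl r hr).trans hkb)]; push_cast; rfl
  have hσh : ∀ b, 0 < σh b → b = k := fun b hb => by
    have hdev := h.eUh_le hb hkp
    rw [heUh b (hk.2 hb), heUh k le_rfl] at hdev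
    have : (b : ℝ) ≤ k := by linarith
    exact (Nat.cast_le.1 this).antisymm (hk.2 hb)
  have heUl : ∀ b, b ≤ k → eUl pbar (2 * cl) σh b = k := fun b hbk =>
    h.2.1.sum_mul_eq fun r hr => by rw [hσh r hr, UlWB_of_le hbk]
  obtain ⟨b, hb⟩ := h.1.exists_pos
  have hclk : (cl : ℝ) ≤ k := by
    have := h.eUl_le hb (hclch.le.trans hpbar)
    rw [heUl b (hσl b hb)] at this
    exact (half_le_eUl h.2.1).trans this
  have hkch : (k : ℝ) ≤ ch := by
    have := h.eUh_le hk.1 hpbar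
    rw [heUh k le_rfl] at this
    linarith [half_le_eUh (c := ch) h.1]
  refine ⟨k, by exact_mod_cast hclk, by exact_mod_cast hkch, ?_, ?_⟩
  · exact h.1.sum_mul_eq fun b hb => heUl b (hσl b hb)
  · exact h.2.1.sum_mul_eq fun b hb => by rw [hσh b hb, heUh k le_rfl]

end IsNashWB

section PureEquilibrium

variable {pbar vl vh cl ch p b : ℕ}

lemma pos_single_iff : 0 < (Pi.single p 1 : ℕ → ℝ) b ↔ b = p := by
  rcases eq_or_ne b p with rfl | hbp
  · simp
  · simp [hbp]

lemma isMixed_single (hp : p ≤ pbar) : IsMixed pbar (Pi.single p 1) := by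
  refine ⟨fun b => by rw [Pi.single_apply]; positivity, fun b hb => Pi.single_eq_of_ne (by omega) _, ?_⟩
  rw [sum_pi_single', if_pos (mem_range.2 (Nat.lt_succ_of_le hp))]

lemma sum_single_mul (hp : p ≤ pbar) (f : ℕ → ℝ) :
    ∑ r ∈ range (pbar + 1), (Pi.single p 1 : ℕ → ℝ) r * f r = f p :=
  (isMixed_single hp).sum_mul_eq fun _ hr => by rw [pos_single_iff.1 hr]

lemma eUl_single (hp : p ≤ pbar) (b : ℕ) : eUl pbar vl (Pi.single p 1) b = UlWB vl b p :=
  sum_single_mul hp _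

lemma eUh_single (hp : p ≤ pbar) (b : ℕ) : eUh pbar vh (Pi.single p 1) b = UhWB vh b p :=
  sum_single_mul hp _

lemma isNashWB_single (hcl : cl ≤ p) (hch : p ≤ ch) (hp : p ≤ pbar) :
    IsNashWB pbar (2 * cl) (2 * ch) (Pi.single p 1) (Pi.single p 1) := by
  refine ⟨isMixed_single hp, isMixed_single hp, fun b _ hb b' _ => ?_, fun b _ hb b' _ => ?_⟩
  · rw [pos_single_iff.1 hb, eUl_single hp, eUl_single hp, UlWB_of_le le_rfl]
    exact UlWB_le_of_half_le hcl b'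
  · rw [pos_single_iff.1 hb, eUh_single hp, eUh_single hp, UhWB_of_le le_rfl]
    push_cast
    exact UhWB_le_of_le_half hch b'

lemma piL_single (hp : p ≤ pbar) : piL pbar vl (Pi.single p 1) (Pi.single p 1) = p := by
  rw [piL, sum_single_mul hp, eUl_single hp, UlWB_of_le le_rfl]

lemma piH_single (hp : p ≤ pbar) : piH pbar vh (Pi.single p 1) (Pi.single p 1) = vh - p := by
  rw [piH, sum_single_mul hp, eUh_single hp, UhWB_of_le le_rfl]

end PureEquilibrium

theorem stmt1_general (pbar vl vh cl ch : ℕ) (hvl : vl = 2 * cl) (hvh : vh = 2 * ch)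
    (hclch : cl < ch) (hpbar : ch ≤ pbar) :
    ∀ x y : ℝ,
      (∃ σl σh, IsNashWB pbar vl vh σl σh ∧
        piL pbar vl σl σh = x ∧ piH pbar vh σl σh = y) ↔
      (∃ t : ℕ, t ≤ ch - cl ∧ x = ((cl + t : ℕ) : ℝ) ∧
        y = ((ch + ((ch - cl) - t) : ℕ) : ℝ)) := by
  subst hvl hvh
  intro x y
  have hy : ∀ p, cl ≤ p → p ≤ ch →
      ((ch + ((ch - cl) - (p - cl)) : ℕ) : ℝ) = ((2 * ch : ℕ) : ℝ) - p := fun p hclp hpch => by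
    rw [show ch + ((ch - cl) - (p - cl)) = 2 * ch - p by omega, Nat.cast_sub (by omega)]
  constructor
  · rintro ⟨σl, σh, h, rfl, rfl⟩
    obtain ⟨k, hclk, hkch, hL, hH⟩ := h.exists_payoffs_eq hclch hpbar
    refine ⟨k - cl, by omega, by rw [hL, Nat.add_sub_cancel' hclk], ?_⟩
    rw [hH, hy k hclk hkch]
    push_cast
    rfl
  · rintro ⟨t, ht, rfl, rfl⟩
    have hp : cl + t ≤ pbar := by omega
    refine ⟨_, _, isNashWB_single (by omega) (by omega) hp, piL_single hp, ?_⟩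
    rw [piH_single hp, ← hy (cl + t) (by omega) (by omega), Nat.add_sub_cancel_left]

/-- The set of Nash equilibrium payoff vectors of the winner-bid auction is
`{(cl + t, ch + (ES - t)) : t = 0, ..., ES}` with `ES = ch - cl`. -/
theorem stmt1 (pbar vl vh cl ch : ℕ) (hvl : vl = 2 * cl) (hvh : vh = 2 * ch)
    (hcl : 0 < cl) (hclch : cl < ch) (hpbar : ch ≤ pbar) :
    ∀ x y : ℝ,
      (∃ σl σh, IsNashWB pbar vl vh σl σh ∧
        piL pbar vl σl σh = x ∧ piH pbar vh σl σh = y) ↔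
      (∃ t : ℕ, t ≤ ch - cl ∧ x = ((cl + t : ℕ) : ℝ) ∧
        y = ((ch + ((ch - cl) - t) : ℕ) : ℝ)) :=
  stmt1_general pbar vl vh cl ch hvl hvh hclch hpbar
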